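/- Let n ≥ 3 be an integer and x ≥ 0 a real number. Then the second-order modified Baskakov–Durrmeyer operator reproduces constants and linear functions: V̂_{n,2}(e_0; x) = 1 and V̂_{n,2}(e_1; x) = x, where e_0(t) = 1 and e_1(t) = t (in particular the defining series and integrals converge absolutely). -/

import Mathlib

open MeasureTheory Filter Topology

/-- Baskakov basis function `p_{n,k}(x) = C(n+k-1, k) x^k / (1+x)^{n+k}`. -/
noncomputable def bask (n k : ℕ) (x : ℝ) : ℝ :=
  (Nat.choose (n + k - 1) k : ℝ) * x ^ k / (1 + x) ^ (n + k)

/-- Second-order modified basis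
`p^2_{n,k}(x) = (3/2 + 2x - n x(1+x)) p_{n+2,k}(x) + 2n x(1+x) p_{n+2,k-1}(x)
  + (-1/2 - 2x - n x(1+x)) p_{n+2,k-2}(x)`, with `p_{n+2,j} = 0` for `j < 0`. -/
noncomputable def p2 (n k : ℕ) (x : ℝ) : ℝ :=
  (3 / 2 + 2 * x - (n : ℝ) * x * (1 + x)) * bask (n + 2) k x
    + 2 * (n : ℝ) * x * (1 + x) * (if k = 0 then 0 else bask (n + 2) (k - 1) x)
    + (-(1 / 2) - 2 * x - (n : ℝ) * x * (1 + x)) * (if k < 2 then 0 else bask (n + 2) (k - 2) x)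

/-- Second-order modified Baskakov–Durrmeyer operator. -/
noncomputable def V2 (n : ℕ) (f : ℝ → ℝ) (x : ℝ) : ℝ :=
  ((n : ℝ) - 1) * ∑' k : ℕ, p2 n k x * ∫ t in Set.Ioi (0 : ℝ), bask n k t * f t

/-!
The Beta integral `∫₀^∞ t^k / (1+t)^(k+j+2) dt = k! j! / (k+j+1)!` gives `∫ p_{n,k} = 1/(n-1)` for
every `k`, and the identity `t p_{n,k}(t) = (k+1)/(n-1) · p_{n-1,k+1}(t)` then gives
`∫ t p_{n,k}(t) dt = (k+1)/((n-1)(n-2))`. Hence `V̂_{n,2}(e₀; x) = ∑ₖ p²_{n,k}(x)` and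
`V̂_{n,2}(e₁; x) = ∑ₖ (k+1) p²_{n,k}(x) / (n-2)`. Since `p²_{n,k}` combines `p_{n+2,k}`, `p_{n+2,k-1}`,
`p_{n+2,k-2}` with coefficients summing to `1`, these sums follow from the moments
`∑ₖ p_{m,k}(x) = 1` (negative binomial series) and `∑ₖ k p_{m,k}(x) = m x`; the same identity,
read as `(k+1) p_{m,k+1}(x) = m x p_{m+1,k}(x)`, reduces the second moment to the first.
-/

open Set

lemma integrableOn_and_integral_pow_div_one_add_pow (k : ℕ) : ∀ j : ℕ,
    IntegrableOn (fun t : ℝ => t ^ k / (1 + t) ^ (k + j + 2)) (Ioi 0) ∧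
      ∫ t in Ioi (0 : ℝ), t ^ k / (1 + t) ^ (k + j + 2)
        = (k.factorial * j.factorial : ℝ) / (k + j + 1).factorial := by
  induction k with
  | zero =>
    intro j
    have hF : ∀ t ∈ Ici (0 : ℝ),
        HasDerivAt (fun t : ℝ => -((1 + t) ^ (j + 1))⁻¹ / (j + 1))
          (t ^ 0 / (1 + t) ^ (0 + j + 2)) t := by
      intro t ht
      have ht : (0 : ℝ) < 1 + t := by simp only [mem_Ici] at ht; linarith
      have hpow : HasDerivAt (fun t : ℝ => (1 + t) ^ (j + 1)) ((j + 1) * (1 + t) ^ j) t := by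
        simpa using ((hasDerivAt_id t).const_add 1).fun_pow (j + 1)
      refine ((hpow.fun_inv (pow_pos ht _).ne').fun_neg.div_const ((j : ℝ) + 1)).congr_deriv ?_
      field_simp
      ring
    have hF_pos : ∀ t ∈ Ioi (0 : ℝ), 0 ≤ t ^ 0 / (1 + t) ^ (0 + j + 2) := fun t ht => by
      simp only [mem_Ioi] at ht; positivity
    have hF_lim : Tendsto (fun t : ℝ => -((1 + t) ^ (j + 1))⁻¹ / (j + 1)) atTop (𝓝 0) := by
      have : Tendsto (fun t : ℝ => (1 + t) ^ (j + 1)) atTop atTop :=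
        (tendsto_pow_atTop (by omega)).comp (tendsto_atTop_add_const_left atTop 1 tendsto_id)
      simpa using this.inv_tendsto_atTop.neg.div_const ((j : ℝ) + 1)
    refine ⟨integrableOn_Ioi_deriv_of_nonneg' hF hF_pos hF_lim, ?_⟩
    rw [integral_Ioi_of_hasDerivAt_of_nonneg' hF hF_pos hF_lim]
    simp only [zero_add, add_zero, one_pow, Nat.factorial_zero, Nat.factorial_succ, Nat.cast_mul,
      Nat.cast_one, Nat.cast_add]
    field_simp
    ring
  | succ k ih =>
    intro j
    obtain ⟨hint, hval⟩ := ih j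
    obtain ⟨hint', hval'⟩ := ih (j + 1)
    have hsplit : EqOn (fun t : ℝ => t ^ (k + 1) / (1 + t) ^ (k + 1 + j + 2))
        (fun t => t ^ k / (1 + t) ^ (k + j + 2) - t ^ k / (1 + t) ^ (k + (j + 1) + 2)) (Ioi 0) := by
      intro t ht
      have ht : (0 : ℝ) < 1 + t := by simp only [mem_Ioi] at ht; linarith
      simp only [show k + 1 + j + 2 = k + j + 2 + 1 by omega,
        show k + (j + 1) + 2 = k + j + 2 + 1 by omega, pow_succ]
      field_simp
      ring
    refine ⟨(hint.sub hint').congr_fun hsplit.symm measurableSet_Ioi, ?_⟩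
    rw [setIntegral_congr_fun measurableSet_Ioi hsplit, integral_sub hint hint', hval, hval',
      show k + (j + 1) + 1 = k + j + 1 + 1 by omega, show k + 1 + j + 1 = k + j + 1 + 1 by omega,
      Nat.factorial_succ (k + j + 1), Nat.factorial_succ k, Nat.factorial_succ j]
    push_cast
    field_simp
    ring

lemma succ_mul_bask_succ (m k : ℕ) (t : ℝ) :
    (k + 1) * bask m (k + 1) t = m * t * bask (m + 1) k t := by
  have hchoose : ((m + k).choose (k + 1) : ℝ) * (k + 1) = (m + k).choose k * m := by
    exact_mod_cast (Nat.add_sub_cancel_right m k ▸ Nat.choose_succ_right_eq (m + k) k)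
  rw [bask, bask, show m + (k + 1) - 1 = m + k by omega, show m + 1 + k - 1 = m + k by omega,
    show m + 1 + k = m + (k + 1) by omega, pow_succ t k]
  linear_combination t ^ k * t / (1 + t) ^ (m + (k + 1)) * hchoose

lemma bask_succ_mul_id {m : ℕ} (hm : m ≠ 0) (k : ℕ) (t : ℝ) :
    bask (m + 1) k t * t = (k + 1) / m * bask m (k + 1) t := by
  rw [div_mul_eq_mul_div, succ_mul_bask_succ]
  field_simp

lemma bask_eq_choose_mul (j k : ℕ) (t : ℝ) :
    bask (j + 2) k t = (j + 1 + k).choose k * (t ^ k / (1 + t) ^ (k + j + 2)) := by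
  rw [bask, mul_div_assoc, show j + 2 + k - 1 = j + 1 + k by omega,
    show j + 2 + k = k + j + 2 by omega]

lemma integrableOn_bask {n : ℕ} (hn : 2 ≤ n) (k : ℕ) : IntegrableOn (bask n k) (Ioi 0) := by
  obtain ⟨j, rfl⟩ : ∃ j, n = j + 2 := ⟨n - 2, by omega⟩
  simp only [funext (bask_eq_choose_mul j k)]
  exact ((integrableOn_and_integral_pow_div_one_add_pow k j).1.const_mul _)

lemma integral_bask {n : ℕ} (hn : 2 ≤ n) (k : ℕ) :
    ∫ t in Ioi (0 : ℝ), bask n k t = ((n : ℝ) - 1)⁻¹ := by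
  obtain ⟨j, rfl⟩ : ∃ j, n = j + 2 := ⟨n - 2, by omega⟩
  simp only [bask_eq_choose_mul, integral_const_mul,
    (integrableOn_and_integral_pow_div_one_add_pow k j).2]
  have h : ((j + 1 + k).choose k * k.factorial * ((j + 1) * j.factorial) : ℝ)
      = (k + j + 1).factorial := by
    rw [show k + j + 1 = j + 1 + k by omega, ← Nat.add_choose_mul_factorial_mul_factorial,
      Nat.factorial_succ]
    push_cast
    ring
  rw [show ((j + 2 : ℕ) : ℝ) - 1 = j + 1 by push_cast; ring]
  field_simp
  linear_combination h

lemma integrableOn_bask_mul_id {n : ℕ} (hn : 3 ≤ n) (k : ℕ) :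
    IntegrableOn (fun t => bask n k t * t) (Ioi 0) := by
  obtain ⟨m, rfl⟩ : ∃ m, n = m + 1 := ⟨n - 1, by omega⟩
  simp only [bask_succ_mul_id (show m ≠ 0 by omega)]
  exact (integrableOn_bask (by omega) (k + 1)).const_mul _

lemma integral_bask_mul_id {n : ℕ} (hn : 3 ≤ n) (k : ℕ) :
    ∫ t in Ioi (0 : ℝ), bask n k t * t = (k + 1) / (((n : ℝ) - 1) * ((n : ℝ) - 2)) := by
  obtain ⟨m, rfl⟩ : ∃ m, n = m + 1 := ⟨n - 1, by omega⟩
  simp only [bask_succ_mul_id (show m ≠ 0 by omega), integral_const_mul,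
    integral_bask (show 2 ≤ m by omega)]
  rw [show ((m + 1 : ℕ) : ℝ) - 1 = m by push_cast; ring,
    show ((m + 1 : ℕ) : ℝ) - 2 = m - 1 by push_cast; ring, ← div_eq_mul_inv, div_div]

lemma hasSum_bask {m : ℕ} (hm : 1 ≤ m) {x : ℝ} (hx : 0 ≤ x) :
    HasSum (fun k => bask m k x) 1 := by
  have hx₁ : 0 < 1 + x := by linarith
  have hr : ‖x / (1 + x)‖ < 1 := by
    rw [Real.norm_eq_abs, abs_of_nonneg (by positivity), div_lt_one hx₁]
    linarith
  have h := (hasSum_choose_mul_geometric_of_norm_lt_one (m - 1) hr).mul_right ((1 + x) ^ m)⁻¹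
  rw [Nat.sub_add_cancel hm] at h
  have hsum : 1 / (1 - x / (1 + x)) ^ m * ((1 + x) ^ m)⁻¹ = 1 := by
    rw [show 1 - x / (1 + x) = (1 + x)⁻¹ by field_simp; ring, inv_pow]
    field_simp
  rw [hsum] at h
  refine h.congr_fun fun k => ?_
  rw [bask, show m + k - 1 = k + (m - 1) by omega, ← Nat.choose_symm_add, add_comm m k, pow_add,
    div_pow]
  field_simp

lemma hasSum_natCast_mul_bask (m : ℕ) {x : ℝ} (hx : 0 ≤ x) :
    HasSum (fun k : ℕ => (k : ℝ) * bask m k x) (m * x) := by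
  have h := (hasSum_bask (Nat.le_add_left 1 m) hx).mul_left ((m : ℝ) * x)
  simp only [← succ_mul_bask_succ, mul_one] at h
  rw [← hasSum_nat_add_iff' 1]
  simpa using h

lemma hasSum_natCast_add_mul_bask {m : ℕ} (hm : 1 ≤ m) {x : ℝ} (hx : 0 ≤ x) (c : ℝ) :
    HasSum (fun k : ℕ => ((k : ℝ) + c) * bask m k x) (m * x + c) := by
  simpa [add_mul] using (hasSum_natCast_mul_bask m hx).add ((hasSum_bask hm hx).mul_left c)

lemma hasSum_mul_ite_lt_sub {R : Type*} [Semiring R] [TopologicalSpace R] {w f : ℕ → R} {a : R}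
    (j : ℕ) (h : HasSum (fun k => w (k + j) * f k) a) :
    HasSum (fun k => w k * if k < j then 0 else f (k - j)) a := by
  rw [← (add_left_injective j).hasSum_iff]
  · simpa [Function.comp_def] using h
  · rintro k hk
    have hkj : k < j := by
      by_contra hkj
      exact hk ⟨k - j, Nat.sub_add_cancel (not_lt.mp hkj)⟩
    simp [hkj]

lemma hasSum_mul_p2 (n : ℕ) (x : ℝ) (w : ℕ → ℝ) {s₀ s₁ s₂ : ℝ}
    (h₀ : HasSum (fun k => w k * bask (n + 2) k x) s₀)
    (h₁ : HasSum (fun k => w (k + 1) * bask (n + 2) k x) s₁)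
    (h₂ : HasSum (fun k => w (k + 2) * bask (n + 2) k x) s₂) :
    HasSum (fun k => w k * p2 n k x)
      ((3 / 2 + 2 * x - n * x * (1 + x)) * s₀ + 2 * n * x * (1 + x) * s₁
        + (-(1 / 2) - 2 * x - n * x * (1 + x)) * s₂) := by
  have h := (((h₀.mul_left (3 / 2 + 2 * x - n * x * (1 + x))).add
    ((hasSum_mul_ite_lt_sub 1 h₁).mul_left (2 * n * x * (1 + x)))).add
    ((hasSum_mul_ite_lt_sub 2 h₂).mul_left (-(1 / 2) - 2 * x - n * x * (1 + x))))
  refine h.congr_fun fun k => ?_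
  simp only [p2, Nat.lt_one_iff]
  ring

lemma hasSum_p2 (n : ℕ) {x : ℝ} (hx : 0 ≤ x) : HasSum (fun k => p2 n k x) 1 := by
  have hb := hasSum_bask (Nat.le_add_left 1 (n + 1)) hx
  convert hasSum_mul_p2 n x (fun _ => 1) (by simpa using hb) (by simpa using hb)
    (by simpa using hb) using 1
  · simp
  · ring

lemma hasSum_succ_mul_p2 (n : ℕ) {x : ℝ} (hx : 0 ≤ x) :
    HasSum (fun k : ℕ => ((k : ℝ) + 1) * p2 n k x) ((n - 2) * x) := by
  have hb (c : ℝ) := hasSum_natCast_add_mul_bask (Nat.le_add_left 1 (n + 1)) hx c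
  convert hasSum_mul_p2 n x (fun k => (k : ℝ) + 1) (hb 1)
    ((hb 2).congr_fun fun k => by push_cast; ring)
    ((hb 3).congr_fun fun k => by push_cast; ring) using 1
  push_cast
  ring

theorem V2_reproduces_linear (n : ℕ) (hn : 3 ≤ n) (x : ℝ) (hx : 0 ≤ x) :
    (∀ k : ℕ, IntegrableOn (fun t : ℝ => bask n k t * (1 : ℝ)) (Set.Ioi 0)) ∧
    (∀ k : ℕ, IntegrableOn (fun t : ℝ => bask n k t * t) (Set.Ioi 0)) ∧
    Summable (fun k : ℕ =>
      |p2 n k x * ∫ t in Set.Ioi (0 : ℝ), bask n k t * (1 : ℝ)|) ∧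
    Summable (fun k : ℕ =>
      |p2 n k x * ∫ t in Set.Ioi (0 : ℝ), bask n k t * t|) ∧
    V2 n (fun _ => (1 : ℝ)) x = 1 ∧ V2 n (fun t => t) x = x := by
  have hn₁ : (n : ℝ) - 1 ≠ 0 := by
    rw [sub_ne_zero]; exact_mod_cast (show n ≠ 1 by omega)
  have hn₂ : (n : ℝ) - 2 ≠ 0 := by
    rw [sub_ne_zero]; exact_mod_cast (show n ≠ 2 by omega)
  have h₀ : HasSum (fun k => p2 n k x * ∫ t in Ioi (0 : ℝ), bask n k t * (1 : ℝ))
      ((n - 1)⁻¹) := by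
    simpa [integral_bask (by omega : 2 ≤ n)] using (hasSum_p2 n hx).mul_right ((n - 1 : ℝ)⁻¹)
  have h₁ : HasSum (fun k => p2 n k x * ∫ t in Ioi (0 : ℝ), bask n k t * t)
      (x / (n - 1)) := by
    have h := (hasSum_succ_mul_p2 n hx).div_const ((n - 1) * (n - 2))
    rw [show (n - 2) * x / ((n - 1) * (n - 2)) = x / (n - 1) by field_simp] at h
    refine h.congr_fun fun k => ?_
    rw [integral_bask_mul_id hn]
    ring
  refine ⟨fun k => by simpa using integrableOn_bask (by omega) k,
    integrableOn_bask_mul_id hn, h₀.summable.abs, h₁.summable.abs, ?_, ?_⟩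
  · rw [V2, h₀.tsum_eq, mul_inv_cancel₀ hn₁]
  · rw [V2, h₁.tsum_eq, mul_div_cancel₀ _ hn₁]
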